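/- arXiv:1807.08783 — 2 statements merged into one kernel-verified Lean document; each statement's English description precedes it below -/
import Mathlib

section
/- Let x ∉ D. If both liminf_n G_n'(x) and limsup_n G_n'(x) are infinite (each equal to +∞ or −∞), where G_n'(x) = g_1'(x) + ⋯ + g_n'(x), then the Takagi function T is not approximately derivable at x (there is no real number L that is an approximate derivative of T at x). -/
/-!
Suppose `T` had approximate derivative `L` at a non-dyadic `x`. Call a level `m` good when `x`
lies in the middle half of its dyadic interval `I` of length `2⁻¹ ^ (m + 1)`. On `I` the functions
`g 1, …, g m` are affine, so `T` stays within `2⁻¹ ^ (m + 1)` of the line of slope `G' m x`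
through `(x, T x)`; the points `y` with `2⁻¹ ^ (m + 4) ≤ y - x < 2⁻¹ ^ (m + 3)` lie in `I` and
fill a quarter of `(x - r, x + r)` for `r = 2⁻¹ ^ (m + 3)`. Approximate differentiability
therefore forces `|G' m x - L| < 9` at all large good levels.

Good levels occur infinitely often, because at a bad level the distance from `2 ^ (m + 1) * x`
to the nearest integer doubles at the next level. At a bad level `m` the slopes of `g (m + 1)` and
`g (m + 2)` at `x` agree, so between two consecutive good levels `G' n x` moves monotonically.
Hence eventually `|G' n x - L| ≤ 10`, and the `limsup` of `G' n x` is finite.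
-/

open MeasureTheory Filter Set

noncomputable section

/-- The set of dyadic numbers of level `n`: `{k / 2^n : k ∈ ℤ}`. -/
def Dset (n : ℕ) : Set ℝ := {y : ℝ | ∃ k : ℤ, y = (k : ℝ) / 2 ^ n}

/-- The set of all dyadic numbers. -/
def Ddyadic : Set ℝ := ⋃ n, Dset n

/-- `g k x = dist(x, D_k)`. -/
def g (k : ℕ) (x : ℝ) : ℝ := Metric.infDist x (Dset k)

/-- The Takagi function `T x = ∑_{k=1}^∞ g_k(x)`. -/
def T (x : ℝ) : ℝ := ∑' k : ℕ, g (k + 1) x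

/-- `G' n x = g_1'(x) + ⋯ + g_n'(x)` (so `G' 0 x = 0`). -/
def G' (n : ℕ) (x : ℝ) : ℝ := ∑ k ∈ Finset.range n, deriv (g (k + 1)) x

/-- `f` is approximately derivable at `x` with approximate derivative `L`:
for every `ε > 0`, the relative measure of the set of points `y` in `(x - r, x + r)`,
`y ≠ x`, where `|(f y - f x - L (y - x)) / (y - x)| ≥ ε`, divided by `2r`,
tends to `0` as `r → 0⁺`. -/
def ApproxDerivAt (f : ℝ → ℝ) (x L : ℝ) : Prop :=
  ∀ ε > (0 : ℝ), Tendsto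
    (fun r : ℝ => volume (Ioo (x - r) (x + r) ∩
        {y : ℝ | y ≠ x ∧ ε ≤ |(f y - f x - L * (y - x)) / (y - x)|}) /
      ENNReal.ofReal (2 * r))
    (nhdsWithin 0 (Ioi 0)) (nhds 0)


open Topology

lemma fract_two_mul_of_lt_half {u : ℝ} (h : Int.fract u < 1 / 2) :
    Int.fract (2 * u) = 2 * Int.fract u :=
  Int.fract_eq_iff.2 ⟨by linarith [Int.fract_nonneg u], by linarith, 2 * ⌊u⌋,
    by push_cast; rw [Int.fract]; ring⟩

lemma fract_two_mul_of_half_le {u : ℝ} (h : 1 / 2 ≤ Int.fract u) :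
    Int.fract (2 * u) = 2 * Int.fract u - 1 :=
  Int.fract_eq_iff.2 ⟨by linarith, by linarith [Int.fract_lt_one u], 2 * ⌊u⌋ + 1,
    by push_cast; rw [Int.fract]; ring⟩

lemma fract_lt_half_iff (u : ℝ) : Int.fract u < 1 / 2 ↔ ⌊2 * u⌋ < 2 * ⌊u⌋ + 1 := by
  rw [Int.floor_lt, Int.fract]
  push_cast
  constructor <;> intro h <;> linarith

lemma abs_two_mul_sub_round {u : ℝ} (h : |u - round u| < 1 / 4) :
    |2 * u - round (2 * u)| = 2 * |u - round u| := by
  have hround : round (2 * u) = 2 * round u := by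
    rw [round_eq_iff]
    rw [abs_lt] at h
    push_cast
    constructor <;> linarith
  rw [hround, Int.cast_mul, Int.cast_ofNat, ← mul_sub, abs_mul, abs_two]

lemma floor_eq_of_floor_two_pow_mul_eq (d : ℕ) {s t : ℝ} (h : ⌊2 ^ d * t⌋ = ⌊2 ^ d * s⌋) :
    ⌊t⌋ = ⌊s⌋ := by
  have hdiv : ∀ u : ℝ, ⌊u⌋ = ⌊2 ^ d * u⌋ / 2 ^ d := fun u => by
    have := Int.floor_div_natCast (2 ^ d * u) (2 ^ d)
    push_cast at this
    rwa [mul_div_cancel_left₀ _ (by positivity)] at this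
  rw [hdiv t, hdiv s, h]

lemma floor_two_pow_mul_eq_of_le {p q : ℕ} (hpq : p ≤ q) {x y : ℝ}
    (h : ⌊2 ^ q * y⌋ = ⌊2 ^ q * x⌋) : ⌊2 ^ p * y⌋ = ⌊2 ^ p * x⌋ := by
  refine floor_eq_of_floor_two_pow_mul_eq (q - p) ?_
  rwa [← mul_assoc, ← mul_assoc, ← pow_add, Nat.sub_add_cancel hpq]

lemma min_fract_sub_min_fract {s t : ℝ} (h : ⌊2 * t⌋ = ⌊2 * s⌋) :
    min (Int.fract t) (1 - Int.fract t) - min (Int.fract s) (1 - Int.fract s) =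
      (if Int.fract s < 1 / 2 then 1 else -1) * (t - s) := by
  have hfloor : ⌊t⌋ = ⌊s⌋ := floor_eq_of_floor_two_pow_mul_eq 1 (by simpa using h)
  have hfract : Int.fract t - Int.fract s = t - s := by
    rw [Int.fract, Int.fract, hfloor]
    ring
  have hhalf : Int.fract t < 1 / 2 ↔ Int.fract s < 1 / 2 := by
    rw [fract_lt_half_iff, fract_lt_half_iff, h, hfloor]
  split_ifs with hs
  · rw [min_eq_left (by linarith [hhalf.2 hs]), min_eq_left (by linarith)]
    linarith
  · have ht := hhalf.not.2 hs
    rw [min_eq_right (by linarith), min_eq_right (by linarith)]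
    linarith

lemma two_pow_mul_notMem_range_intCast {x : ℝ} (hx : x ∉ Ddyadic) (n : ℕ) :
    2 ^ n * x ∉ range ((↑) : ℤ → ℝ) := by
  rintro ⟨j, hj⟩
  exact hx (mem_iUnion.2 ⟨n, j, by rw [hj]; field_simp⟩)

lemma eventually_floor_two_pow_mul_eq {x : ℝ} (hx : x ∉ Ddyadic) (q : ℕ) :
    ∀ᶠ y in 𝓝 x, ⌊2 ^ q * y⌋ = ⌊2 ^ q * x⌋ := by
  have hmem : 2 ^ q * x ∈ Ioo (⌊2 ^ q * x⌋ : ℝ) (⌊2 ^ q * x⌋ + 1) :=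
    ⟨(Int.floor_le _).lt_of_ne fun h => two_pow_mul_notMem_range_intCast hx q ⟨_, h⟩,
      Int.lt_floor_add_one _⟩
  have hcont : Tendsto (fun y => 2 ^ q * y) (𝓝 x) (𝓝 (2 ^ q * x)) :=
    tendsto_id.const_mul _
  filter_upwards [hcont.eventually (Ioo_mem_nhds hmem.1 hmem.2)] with y hy
  exact Int.floor_eq_on_Ico _ _ (Ioo_subset_Ico_self hy)

lemma g_eq_abs_sub_round (k : ℕ) (y : ℝ) : g k y = |2 ^ k * y - round (2 ^ k * y)| / 2 ^ k := by
  have hpos : (0 : ℝ) < 2 ^ k := by positivity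
  have hdist : ∀ j : ℤ, dist y (j / 2 ^ k) = |2 ^ k * y - j| / 2 ^ k := fun j => by
    have hscale : y - j / 2 ^ k = (2 ^ k * y - j) / 2 ^ k := by field_simp
    rw [Real.dist_eq, hscale, abs_div, abs_of_pos hpos]
  apply le_antisymm
  · rw [← hdist]
    exact Metric.infDist_le_dist_of_mem ⟨_, rfl⟩
  · refine (Metric.le_infDist (s := Dset k) ⟨0, 0, by simp⟩).2 ?_
    rintro _ ⟨j, rfl⟩
    rw [hdist]
    exact div_le_div_of_nonneg_right (round_le _ _) hpos.le

lemma g_le (k : ℕ) (y : ℝ) : g k y ≤ 1 / 2 / 2 ^ k := by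
  rw [g_eq_abs_sub_round]
  gcongr
  exact abs_sub_round _

def gSlope (x : ℝ) (p : ℕ) : ℝ := if Int.fract (2 ^ p * x) < 1 / 2 then 1 else -1

lemma abs_gSlope (x : ℝ) (p : ℕ) : |gSlope x p| = 1 := by
  unfold gSlope
  split_ifs <;> simp

lemma g_sub_g_eq {p n : ℕ} (hpn : p ≤ n) {x y : ℝ}
    (hy : ⌊2 ^ (n + 1) * y⌋ = ⌊2 ^ (n + 1) * x⌋) :
    g p y - g p x = gSlope x p * (y - x) := by
  have hfloor : ⌊2 * (2 ^ p * y)⌋ = ⌊2 * (2 ^ p * x)⌋ := by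
    rw [← mul_assoc, ← mul_assoc, ← pow_succ']
    exact floor_two_pow_mul_eq_of_le (p := p + 1) (by omega) hy
  rw [g_eq_abs_sub_round, g_eq_abs_sub_round, abs_sub_round_eq_min, abs_sub_round_eq_min,
    ← sub_div, min_fract_sub_min_fract hfloor, gSlope]
  field_simp

lemma hasDerivAt_g {x : ℝ} (hx : x ∉ Ddyadic) (p : ℕ) : HasDerivAt (g p) (gSlope x p) x := by
  have hlin : HasDerivAt (fun y => g p x + gSlope x p * (y - x)) (gSlope x p) x := by
    simpa using (((hasDerivAt_id x).sub_const x).const_mul (gSlope x p)).const_add (g p x)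
  refine hlin.congr_of_eventuallyEq ?_
  filter_upwards [eventually_floor_two_pow_mul_eq hx (p + 1)] with y hy
  rw [← g_sub_g_eq le_rfl hy]
  ring

lemma G'_succ {x : ℝ} (hx : x ∉ Ddyadic) (n : ℕ) : G' (n + 1) x = G' n x + gSlope x (n + 1) := by
  rw [G', G', Finset.sum_range_succ, (hasDerivAt_g hx _).deriv]

lemma summable_g_succ (y : ℝ) : Summable fun k => g (k + 1) y :=
  (summable_geometric_two' (1 / 2)).of_nonneg_of_le (fun k => Metric.infDist_nonneg)
    fun k => (g_le (k + 1) y).trans_eq (by ring)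

lemma T_eq_sum_add_tsum (y : ℝ) (n : ℕ) :
    T y = ∑ k ∈ Finset.range n, g (k + 1) y + ∑' k, g (k + n + 1) y :=
  ((summable_g_succ y).sum_add_tsum_nat_add n).symm

lemma tsum_g_tail_mem_Icc (y : ℝ) (n : ℕ) :
    ∑' k, g (k + n + 1) y ∈ Icc 0 (1 / 2 ^ (n + 1)) := by
  have hle : ∀ k, g (k + n + 1) y ≤ 1 / 2 ^ (n + 1) / 2 / 2 ^ k := fun k =>
    (g_le _ y).trans_eq (by ring)
  refine ⟨tsum_nonneg fun k => Metric.infDist_nonneg, ?_⟩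
  calc ∑' k, g (k + n + 1) y ≤ ∑' k : ℕ, 1 / 2 ^ (n + 1) / 2 / 2 ^ k :=
        ((summable_nat_add_iff n).2 (summable_g_succ y)).tsum_le_tsum hle
          (summable_geometric_two' _)
    _ = 1 / 2 ^ (n + 1) := tsum_geometric_two' _

lemma abs_T_sub_T_sub_G'_mul_le {x y : ℝ} (hx : x ∉ Ddyadic) {n : ℕ}
    (hy : ⌊2 ^ (n + 1) * y⌋ = ⌊2 ^ (n + 1) * x⌋) :
    |T y - T x - G' n x * (y - x)| ≤ 1 / 2 ^ (n + 1) := by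
  have hpartial : ∑ k ∈ Finset.range n, g (k + 1) y - ∑ k ∈ Finset.range n, g (k + 1) x =
      G' n x * (y - x) := by
    rw [← Finset.sum_sub_distrib, G', Finset.sum_mul]
    refine Finset.sum_congr rfl fun k hk => ?_
    rw [(hasDerivAt_g hx _).deriv, g_sub_g_eq (by simp at hk; omega) hy]
  obtain ⟨hy₀, hy₁⟩ := tsum_g_tail_mem_Icc y n
  obtain ⟨hx₀, hx₁⟩ := tsum_g_tail_mem_Icc x n
  rw [T_eq_sum_add_tsum y n, T_eq_sum_add_tsum x n, abs_le]
  constructor <;> linarith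

/-- Level `m` is good when `x` lies in the middle half of its dyadic interval of length
`2⁻¹ ^ (m + 1)`. -/
def IsGoodLevel (x : ℝ) (m : ℕ) : Prop := 1 / 4 ≤ |2 ^ (m + 1) * x - round (2 ^ (m + 1) * x)|

lemma gSlope_add_two_of_not_isGoodLevel {x : ℝ} {m : ℕ} (h : ¬ IsGoodLevel x m) :
    gSlope x (m + 2) = gSlope x (m + 1) := by
  rw [IsGoodLevel, not_le, abs_sub_round_eq_min, min_lt_iff] at h
  have hdouble : (2 : ℝ) ^ (m + 2) * x = 2 * (2 ^ (m + 1) * x) := by ring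
  simp only [gSlope, hdouble]
  rcases h with h | h
  · rw [fract_two_mul_of_lt_half (by linarith), if_pos (by linarith), if_pos (by linarith)]
  · rw [fract_two_mul_of_half_le (by linarith), if_neg (not_lt.2 (by linarith)),
      if_neg (not_lt.2 (by linarith))]

lemma frequently_isGoodLevel {x : ℝ} (hx : x ∉ Ddyadic) : ∃ᶠ m in atTop, IsGoodLevel x m := by
  set δ : ℕ → ℝ := fun m => |2 ^ (m + 1) * x - round (2 ^ (m + 1) * x)|
  refine frequently_atTop.2 fun N => ?_
  by_contra! hbad
  have hgrow : ∀ t, δ (N + t) = 2 ^ t * δ N := by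
    intro t
    induction t with
    | zero => simp
    | succ t ih =>
      have hdouble : (2 : ℝ) ^ (N + (t + 1) + 1) * x = 2 * (2 ^ (N + t + 1) * x) := by ring
      calc δ (N + (t + 1)) = 2 * δ (N + t) := by
            simp only [δ, hdouble]
            exact abs_two_mul_sub_round (not_le.1 (hbad (N + t) (by omega)))
        _ = 2 ^ (t + 1) * δ N := by rw [ih, pow_succ]; ring
  have hpos : 0 < δ N := abs_pos.2 <| sub_ne_zero.2 fun h =>
    two_pow_mul_notMem_range_intCast hx (N + 1) ⟨_, h.symm⟩
  obtain ⟨t, ht⟩ := pow_unbounded_of_one_lt (1 / 4 / δ N) one_lt_two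
  rw [div_lt_iff₀ hpos] at ht
  have := not_le.1 (hbad (N + t) (by omega))
  linarith [hgrow t]

lemma floor_eq_of_isGoodLevel {x y : ℝ} {m : ℕ} (hm : IsGoodLevel x m) (hxy : x ≤ y)
    (hy : y - x < 1 / 2 ^ (m + 3)) : ⌊2 ^ (m + 1) * y⌋ = ⌊2 ^ (m + 1) * x⌋ := by
  rw [IsGoodLevel, abs_sub_round_eq_min, le_min_iff] at hm
  have hscale : 2 ^ (m + 1) * (y - x) < 1 / 4 := by
    calc 2 ^ (m + 1) * (y - x) < 2 ^ (m + 1) * (1 / 2 ^ (m + 3)) := by gcongr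
      _ = 1 / 4 := by field_simp; ring
  have hfloor := Int.floor_le (2 ^ (m + 1) * x)
  rw [Int.floor_eq_iff]
  constructor
  · nlinarith [pow_pos (two_pos : (0 : ℝ) < 2) (m + 1)]
  · rw [Int.fract] at hm
    linarith

lemma one_le_abs_slope_of_isGoodLevel {x y L : ℝ} {m : ℕ} (hx : x ∉ Ddyadic)
    (hm : IsGoodLevel x m) (hL : 9 ≤ |G' m x - L|)
    (hy₁ : 1 / 2 ^ (m + 4) ≤ y - x) (hy₂ : y - x < 1 / 2 ^ (m + 3)) :
    1 ≤ |(T y - T x - L * (y - x)) / (y - x)| := by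
  have hpos : 0 < y - x := lt_of_lt_of_le (by positivity) hy₁
  have hT := abs_T_sub_T_sub_G'_mul_le hx (floor_eq_of_isGoodLevel hm (by linarith) hy₂)
  have hcell : (1 : ℝ) / 2 ^ (m + 1) = 8 * (1 / 2 ^ (m + 4)) := by ring
  have hdiff : (T y - T x - L * (y - x)) - (T y - T x - G' m x * (y - x)) =
      (G' m x - L) * (y - x) := by ring
  have hfar : 9 * (y - x) ≤ |G' m x - L| * (y - x) := mul_le_mul_of_nonneg_right hL hpos.le
  have htri := abs_sub (T y - T x - L * (y - x)) (T y - T x - G' m x * (y - x))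
  rw [hdiff, abs_mul, abs_of_pos hpos] at htri
  rw [abs_div, abs_of_pos hpos, le_div_iff₀ hpos, one_mul]
  linarith

lemma ApproxDerivAt.eventually_exists_abs_slope_lt {f : ℝ → ℝ} {x L : ℝ}
    (h : ApproxDerivAt f x L) {ε : ℝ} (hε : 0 < ε) :
    ∀ᶠ r in 𝓝[>] 0, ∃ y ∈ Ico (x + r / 2) (x + r), |(f y - f x - L * (y - x)) / (y - x)| < ε := by
  have hquarter : (0 : ENNReal) < ENNReal.ofReal (1 / 4) := by norm_num
  filter_upwards [(h ε hε).eventually (gt_mem_nhds hquarter), self_mem_nhdsWithin]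
    with r hr (hr₀ : 0 < r)
  by_contra! hall
  have hsub : Ico (x + r / 2) (x + r) ⊆
      Ioo (x - r) (x + r) ∩ {y | y ≠ x ∧ ε ≤ |(f y - f x - L * (y - x)) / (y - x)|} :=
    fun y hy => ⟨⟨by linarith [hy.1], hy.2⟩, (by linarith [hy.1] : x < y).ne', hall y hy⟩
  refine hr.not_ge ?_
  calc ENNReal.ofReal (1 / 4) = ENNReal.ofReal (r / 2) / ENNReal.ofReal (2 * r) := by
        rw [← ENNReal.ofReal_div_of_pos (by positivity)]
        congr 1
        field_simp
        ring
    _ = volume (Ico (x + r / 2) (x + r)) / ENNReal.ofReal (2 * r) := by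
        rw [Real.volume_Ico]
        congr 2
        ring
    _ ≤ _ := ENNReal.div_le_div_right (measure_mono hsub) _

lemma ApproxDerivAt.eventually_abs_G'_sub_lt {x L : ℝ} (hx : x ∉ Ddyadic)
    (h : ApproxDerivAt T x L) : ∀ᶠ m in atTop, IsGoodLevel x m → |G' m x - L| < 9 := by
  have hr : Tendsto (fun m : ℕ => (1 : ℝ) / 2 ^ (m + 3)) atTop (𝓝[>] 0) := by
    refine tendsto_nhdsWithin_iff.2 ⟨?_, Eventually.of_forall fun m => mem_Ioi.2 (by positivity)⟩
    simp only [one_div, ← inv_pow]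
    exact (tendsto_pow_atTop_nhds_zero_of_lt_one (by norm_num) (by norm_num)).comp
      (tendsto_add_atTop_nat 3)
  filter_upwards [hr.eventually (h.eventually_exists_abs_slope_lt one_pos)]
    with m ⟨y, hy, hlt⟩ hm
  by_contra! hL
  have hhalf : (1 : ℝ) / 2 ^ (m + 3) / 2 = 1 / 2 ^ (m + 4) := by ring
  refine hlt.not_ge (one_le_abs_slope_of_isGoodLevel hx hm hL ?_ ?_)
  · linarith [hy.1]
  · linarith [hy.2]

section Sequences

variable {a : ℕ → ℝ} {P : ℕ → Prop} {L C : ℝ}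

lemma eq_add_mul_of_sub_eq_const {i q : ℕ} {d : ℝ}
    (h : ∀ k, i ≤ k → k < q → a (k + 1) - a k = d) :
    ∀ n, i + n ≤ q → a (i + n) = a i + n * d := by
  intro n
  induction n with
  | zero => simp
  | succ n ih =>
    intro hn
    rw [← add_assoc, ← sub_add_cancel (a (i + n + 1)) (a (i + n)), h _ (by omega) (by omega),
      ih (by omega)]
    push_cast
    ring

lemma mem_uIcc_of_sub_eq_const {i q m : ℕ} {d : ℝ}
    (h : ∀ k, i ≤ k → k < q → a (k + 1) - a k = d) (him : i ≤ m) (hmq : m ≤ q) :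
    a m ∈ uIcc (a i) (a q) := by
  obtain ⟨n, rfl⟩ := Nat.exists_eq_add_of_le him
  obtain ⟨n', rfl⟩ := Nat.exists_eq_add_of_le hmq
  have hm := eq_add_mul_of_sub_eq_const h n (by omega)
  have hq := eq_add_mul_of_sub_eq_const h (n + n') (by omega)
  rw [← add_assoc] at hq
  push_cast at hq
  have hn : (0 : ℝ) ≤ n' := n'.cast_nonneg
  rw [mem_uIcc]
  rcases le_total 0 d with hd | hd
  · left; constructor <;> nlinarith
  · right; constructor <;> nlinarith

lemma abs_sub_le_of_between_consecutive (hstep : ∀ n, |a (n + 1) - a n| ≤ 1)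
    (hbad : ∀ k, ¬ P k → a (k + 2) - a (k + 1) = a (k + 1) - a k)
    {j q : ℕ} (hgap : ∀ k, j < k → k < q → ¬ P k) (hj : |a j - L| ≤ C) (hq : |a q - L| ≤ C)
    {m : ℕ} (hjm : j ≤ m) (hmq : m ≤ q) : |a m - L| ≤ C + 1 := by
  rcases hjm.eq_or_lt with rfl | hjm
  · linarith
  have hconst : ∀ k, j + 1 ≤ k → k < q → a (k + 1) - a k = a (j + 2) - a (j + 1) := by
    intro k hk hkq
    induction k, hk using Nat.le_induction with
    | base => rfl
    | succ k hk ih => rw [← ih (by omega)]; exact hbad k (hgap k (by omega) (by omega))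
  have hj₁ : |a (j + 1) - L| ≤ C + 1 := by
    linarith [abs_sub_le (a (j + 1)) (a j) L, hstep j]
  have hm := mem_uIcc_of_sub_eq_const hconst (by omega : j + 1 ≤ m) hmq
  rw [abs_sub_comm, mem_Icc_iff_abs_le] at hj₁ hq ⊢
  exact uIcc_subset_Icc hj₁ (Icc_subset_Icc (by linarith) (by linarith) hq) hm

lemma eventually_abs_sub_le_of_frequently (hstep : ∀ n, |a (n + 1) - a n| ≤ 1)
    (hbad : ∀ k, ¬ P k → a (k + 2) - a (k + 1) = a (k + 1) - a k)
    (hfreq : ∃ᶠ m in atTop, P m) (hclose : ∀ᶠ m in atTop, P m → |a m - L| ≤ C) :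
    ∀ᶠ m in atTop, |a m - L| ≤ C + 1 := by
  classical
  obtain ⟨N, hN⟩ := eventually_atTop.1 hclose
  obtain ⟨j₀, hj₀, hPj₀⟩ := frequently_atTop.1 hfreq N
  filter_upwards [eventually_ge_atTop j₀] with m hm
  have hnext : ∃ q, m < q ∧ P q := frequently_atTop.1 hfreq (m + 1)
  have hj₀j := Nat.le_findGreatest hm hPj₀
  obtain ⟨hmq, hPq⟩ := Nat.find_spec hnext
  refine abs_sub_le_of_between_consecutive hstep hbad (fun k hjk hkq hPk => ?_)
    (hN _ (by omega) (Nat.findGreatest_spec hm hPj₀)) (hN _ (by omega) hPq)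
    (Nat.findGreatest_le m) hmq.le
  rcases le_or_gt k m with hkm | hmk
  · exact Nat.findGreatest_is_greatest hjk hkm hPk
  · exact Nat.find_min hnext hkq ⟨hmk, hPk⟩

end Sequences

lemma limsup_coe_ne_top_and_ne_bot {α : Type*} {l : Filter α} [l.NeBot] {u : α → ℝ} {L C : ℝ}
    (h : ∀ᶠ n in l, |u n - L| ≤ C) :
    limsup (fun n => (u n : EReal)) l ≠ ⊤ ∧ limsup (fun n => (u n : EReal)) l ≠ ⊥ := by
  have hle : limsup (fun n => (u n : EReal)) l ≤ ((L + C : ℝ) : EReal) :=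
    limsup_le_of_le (by isBoundedDefault)
      (h.mono fun n hn => EReal.coe_le_coe_iff.2 (by linarith [(abs_le.1 hn).2]))
  have hge : ((L - C : ℝ) : EReal) ≤ limsup (fun n => (u n : EReal)) l :=
    (le_liminf_of_le (by isBoundedDefault)
      (h.mono fun n hn => EReal.coe_le_coe_iff.2 (by linarith [(abs_le.1 hn).1]))).trans
      liminf_le_limsup
  exact ⟨(hle.trans_lt (EReal.coe_lt_top _)).ne, ((EReal.bot_lt_coe _).trans_le hge).ne'⟩

theorem takagi_not_approx_deriv_of_infinite_limits_general (x : ℝ) (hx : x ∉ Ddyadic)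
    (hS : limsup (fun n : ℕ => ((G' n x : ℝ) : EReal)) atTop = ⊤ ∨
          limsup (fun n : ℕ => ((G' n x : ℝ) : EReal)) atTop = ⊥) :
    ¬ ∃ L : ℝ, ApproxDerivAt T x L := by
  rintro ⟨L, hL⟩
  have hstep : ∀ n, |G' (n + 1) x - G' n x| ≤ 1 := fun n => by
    rw [G'_succ hx, add_sub_cancel_left, abs_gSlope]
  have hbad : ∀ m, ¬ IsGoodLevel x m → G' (m + 2) x - G' (m + 1) x = G' (m + 1) x - G' m x :=
    fun m hm => by
      rw [G'_succ hx (m + 1), G'_succ hx m, gSlope_add_two_of_not_isGoodLevel hm]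
      ring
  have hbounded : ∀ᶠ n in atTop, |G' n x - L| ≤ 9 + 1 :=
    eventually_abs_sub_le_of_frequently hstep hbad (frequently_isGoodLevel hx)
      ((hL.eventually_abs_G'_sub_lt hx).mono fun m hm hgood => (hm hgood).le)
  obtain ⟨hne_top, hne_bot⟩ := limsup_coe_ne_top_and_ne_bot hbounded
  exact hS.elim hne_top hne_bot

theorem takagi_not_approx_deriv_of_infinite_limits (x : ℝ) (hx : x ∉ Ddyadic)
    (hI : liminf (fun n : ℕ => ((G' n x : ℝ) : EReal)) atTop = ⊤ ∨
          liminf (fun n : ℕ => ((G' n x : ℝ) : EReal)) atTop = ⊥)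
    (hS : limsup (fun n : ℕ => ((G' n x : ℝ) : EReal)) atTop = ⊤ ∨
          limsup (fun n : ℕ => ((G' n x : ℝ) : EReal)) atTop = ⊥) :
    ¬ ∃ L : ℝ, ApproxDerivAt T x L :=
  takagi_not_approx_deriv_of_infinite_limits_general x hx hS
end
end

section
/- Let x ∈ D and let n_0 ≥ 0 be the smallest integer such that x ∈ D_{n_0+1}. Then for every integer n > 2n_0, μ({y : 0 < |y − x| < 2^{−(n+1)} and (T(y) − T(x))/(y − x) ≥ n − 2n_0}) ≥ (1/4)·2^{−n}, where μ denotes Lebesgue measure on ℝ. -/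
open MeasureTheory Filter Set

noncomputable section

/-! For `y ∈ (x, x + 2^{-(n+1)})`, each `g_k` with `n₀ < k ≤ n` equals `y - x` at `y`, because
`x ∈ D_k` and `y` lies within half a grid step of `x`; each of the first `n₀` terms, being
`1`-Lipschitz, drops by at most `y - x`; the remaining terms of `T y` are nonnegative, while
`g_k x = 0` for `k > n₀`. So the slope is at least `(n - n₀) - n₀` on an interval of length
`2^{-(n+1)}`. -/

lemma Dset_nonempty (n : ℕ) : (Dset n).Nonempty := ⟨0, 0, by simp⟩

lemma Dset_mono {m n : ℕ} (h : m ≤ n) : Dset m ⊆ Dset n := by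
  rintro _ ⟨j, rfl⟩
  refine ⟨j * 2 ^ (n - m), ?_⟩
  rw [← Nat.add_sub_cancel' h, pow_add, Nat.add_sub_cancel_left]
  push_cast
  field_simp

lemma inv_two_pow_le_abs_sub_of_mem_Dset {k : ℕ} {a b : ℝ} (ha : a ∈ Dset k) (hb : b ∈ Dset k)
    (hab : a ≠ b) : ((2 : ℝ) ^ k)⁻¹ ≤ |a - b| := by
  obtain ⟨i, rfl⟩ := ha
  obtain ⟨j, rfl⟩ := hb
  have hij : i ≠ j := by rintro rfl; exact hab rfl
  have hone : (1 : ℝ) ≤ |(i : ℝ) - j| := by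
    exact_mod_cast Int.one_le_abs (sub_ne_zero.2 hij)
  rw [div_sub_div_same, abs_div, abs_of_pos (by positivity : (0 : ℝ) < 2 ^ k), inv_eq_one_div]
  exact div_le_div_of_nonneg_right hone (by positivity)

lemma g_nonneg (k : ℕ) (y : ℝ) : 0 ≤ g k y := Metric.infDist_nonneg

lemma g_eq_zero_of_mem {k : ℕ} {x : ℝ} (h : x ∈ Dset k) : g k x = 0 :=
  Metric.infDist_zero_of_mem h

lemma g_le_inv_two_pow (k : ℕ) (y : ℝ) : g k y ≤ ((2 : ℝ) ^ k)⁻¹ := by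
  have h2 : (0 : ℝ) < 2 ^ k := by positivity
  have hmem : (⌊y * 2 ^ k⌋ : ℝ) / 2 ^ k ∈ Dset k := ⟨_, rfl⟩
  have hfl := Int.floor_le (y * 2 ^ k)
  have hfu := Int.lt_floor_add_one (y * 2 ^ k)
  calc g k y ≤ dist y ((⌊y * 2 ^ k⌋ : ℝ) / 2 ^ k) := Metric.infDist_le_dist_of_mem hmem
    _ = |y * 2 ^ k - ⌊y * 2 ^ k⌋| / 2 ^ k := by
        rw [Real.dist_eq, ← abs_of_pos h2, ← abs_div, abs_of_pos h2]
        congr 1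
        field_simp
    _ ≤ ((2 : ℝ) ^ k)⁻¹ := by
        rw [inv_eq_one_div]
        gcongr
        rw [abs_le]
        constructor <;> linarith

lemma summable_g (y : ℝ) : Summable (fun k : ℕ => g (k + 1) y) := by
  refine .of_nonneg_of_le (fun k => g_nonneg _ _) (fun k => ?_) summable_geometric_two
  calc g (k + 1) y ≤ ((2 : ℝ) ^ (k + 1))⁻¹ := g_le_inv_two_pow _ _
    _ ≤ (1 / 2 : ℝ) ^ k := by
        rw [one_div, inv_pow]
        exact inv_anti₀ (by positivity) (pow_le_pow_right₀ (by norm_num) k.le_succ)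

lemma g_eq_sub_of_mem {k : ℕ} {x y : ℝ} (hx : x ∈ Dset k) (hxy : x ≤ y)
    (hy : y - x ≤ ((2 : ℝ) ^ (k + 1))⁻¹) : g k y = y - x := by
  have hhalf : ((2 : ℝ) ^ (k + 1))⁻¹ = ((2 : ℝ) ^ k)⁻¹ / 2 := by
    rw [pow_succ, mul_inv, div_eq_mul_inv]
  apply le_antisymm
  · calc g k y ≤ dist y x := Metric.infDist_le_dist_of_mem hx
      _ = y - x := by rw [Real.dist_eq, abs_of_nonneg (by linarith)]
  · refine (Metric.le_infDist (Dset_nonempty k)).2 fun z hz => ?_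
    rw [Real.dist_eq]
    rcases eq_or_ne z x with rfl | hzx
    · exact le_abs_self _
    · have hsep := inv_two_pow_le_abs_sub_of_mem_Dset hz hx hzx
      have htri : |z - x| ≤ |y - z| + (y - x) := by
        simpa [abs_sub_comm z y, abs_of_nonneg (sub_nonneg.2 hxy)] using abs_sub_le z y x
      linarith

lemma sum_range_g_le_T (n : ℕ) (y : ℝ) : ∑ k ∈ Finset.range n, g (k + 1) y ≤ T y := by
  rw [T, ← (summable_g y).sum_add_tsum_nat_add n]
  exact le_add_of_nonneg_right (tsum_nonneg fun _ => g_nonneg _ _)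

lemma T_eq_sum_range_of_mem {n₀ : ℕ} {x : ℝ} (hx : x ∈ Dset (n₀ + 1)) :
    T x = ∑ k ∈ Finset.range n₀, g (k + 1) x := by
  refine tsum_eq_sum fun k hk => g_eq_zero_of_mem (Dset_mono ?_ hx)
  simpa using hk

lemma mul_sub_le_T_sub {n₀ n : ℕ} {x y : ℝ} (hx : x ∈ Dset (n₀ + 1)) (hn : n₀ ≤ n)
    (hxy : x ≤ y) (hy : y - x ≤ ((2 : ℝ) ^ (n + 1))⁻¹) :
    ((n : ℝ) - 2 * n₀) * (y - x) ≤ T y - T x := by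
  have hlip : ∀ k, g k x - g k y ≤ y - x := fun k => by
    have := Metric.infDist_le_infDist_add_dist (x := x) (y := y) (s := Dset k)
    rw [Real.dist_eq, abs_sub_comm, abs_of_nonneg (sub_nonneg.2 hxy)] at this
    exact sub_le_iff_le_add'.2 this
  have hfar : ∀ k ∈ Finset.Ico n₀ n, g (k + 1) y = y - x := fun k hk => by
    rw [Finset.mem_Ico] at hk
    refine g_eq_sub_of_mem (Dset_mono (by omega) hx) hxy (hy.trans ?_)
    exact inv_anti₀ (by positivity) (pow_le_pow_right₀ (by norm_num) (by omega))
  calc ((n : ℝ) - 2 * n₀) * (y - x)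
      = ∑ k ∈ Finset.Ico n₀ n, g (k + 1) y - ∑ _k ∈ Finset.range n₀, (y - x) := by
        rw [Finset.sum_congr rfl hfar]
        simp only [Finset.sum_const, Nat.card_Ico, Finset.card_range, nsmul_eq_mul]
        push_cast [hn]
        ring
    _ ≤ ∑ k ∈ Finset.Ico n₀ n, g (k + 1) y -
          ∑ k ∈ Finset.range n₀, (g (k + 1) x - g (k + 1) y) :=
        sub_le_sub_left (Finset.sum_le_sum fun k _ => hlip (k + 1)) _
    _ = ∑ k ∈ Finset.range n, g (k + 1) y - ∑ k ∈ Finset.range n₀, g (k + 1) x := by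
        rw [← Finset.sum_range_add_sum_Ico _ hn, Finset.sum_sub_distrib]
        ring
    _ ≤ T y - T x := by
        rw [T_eq_sum_range_of_mem hx]
        gcongr
        exact sum_range_g_le_T n y

theorem takagi_dyadic_slope_measure_general (x : ℝ)
    (n0 : ℕ) (hx : x ∈ Dset (n0 + 1)) :
    ∀ n : ℕ, 2 * n0 < n →
      ENNReal.ofReal ((1 / 4) * ((2 : ℝ) ^ n)⁻¹) ≤
        volume {y : ℝ | 0 < |y - x| ∧ |y - x| < ((2 : ℝ) ^ (n + 1))⁻¹ ∧
          (n : ℝ) - 2 * n0 ≤ (T y - T x) / (y - x)} := by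
  intro n hn
  set r : ℝ := ((2 : ℝ) ^ (n + 1))⁻¹
  have hsub : Ioo x (x + r) ⊆ {y : ℝ | 0 < |y - x| ∧ |y - x| < r ∧
      (n : ℝ) - 2 * n0 ≤ (T y - T x) / (y - x)} := by
    rintro y ⟨hxy, hyr⟩
    have hpos : 0 < y - x := sub_pos.2 hxy
    rw [mem_ofPred_eq, abs_of_pos hpos, le_div_iff₀ hpos]
    exact ⟨hpos, by linarith, mul_sub_le_T_sub hx (by omega) hxy.le (by linarith)⟩
  calc ENNReal.ofReal ((1 / 4) * ((2 : ℝ) ^ n)⁻¹) ≤ ENNReal.ofReal r := by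
        refine ENNReal.ofReal_le_ofReal ?_
        rw [show r = ((2 : ℝ) ^ n)⁻¹ / 2 by simp only [r, pow_succ, mul_inv, div_eq_mul_inv]]
        have : (0 : ℝ) ≤ ((2 : ℝ) ^ n)⁻¹ := by positivity
        linarith
    _ = volume (Ioo x (x + r)) := by rw [Real.volume_Ioo, add_sub_cancel_left]
    _ ≤ _ := measure_mono hsub

theorem takagi_dyadic_slope_measure (x : ℝ) (hxD : x ∈ Ddyadic)
    (n0 : ℕ) (hx : x ∈ Dset (n0 + 1)) (hmin : ∀ m : ℕ, x ∈ Dset (m + 1) → n0 ≤ m) :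
    ∀ n : ℕ, 2 * n0 < n →
      ENNReal.ofReal ((1 / 4) * ((2 : ℝ) ^ n)⁻¹) ≤
        volume {y : ℝ | 0 < |y - x| ∧ |y - x| < ((2 : ℝ) ^ (n + 1))⁻¹ ∧
          (n : ℝ) - 2 * n0 ≤ (T y - T x) / (y - x)} :=
  takagi_dyadic_slope_measure_general x n0 hx
end
end
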